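/- arXiv:0707.1196 — 4 statements merged into one kernel-verified Lean document; each statement's English description precedes it below -/
import Mathlib

section
/- Along any solution of the 3D pendulum equations, the vertical component of angular momentum h = ωᵀ J Rᵀe₃ is constant. -/
open Matrix

attribute [local instance] Matrix.frobeniusNormedAddCommGroup Matrix.frobeniusNormedSpace

noncomputable def hat (ω : Fin 3 → ℝ) : Matrix (Fin 3) (Fin 3) ℝ :=
  !![0, -ω 2, ω 1; ω 2, 0, -ω 0; -ω 1, ω 0, 0]

def SO3 : Set (Matrix (Fin 3) (Fin 3) ℝ) := {R | R * Rᵀ = 1 ∧ R.det = 1}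

noncomputable def e3 : Fin 3 → ℝ := ![0, 0, 1]

/-!
With `Γ = Rᵀe₃` (the vertical direction seen in the body frame) and `π = Jω`, the equations
give `Γ̇ = Γ × ω` and `π̇ = π × ω + (mg ρ) × Γ`. Since `J` is symmetric, `h = π ⬝ Γ`, and
`ḣ = (π × ω) ⬝ Γ + (mg ρ × Γ) ⬝ Γ + π ⬝ (Γ × ω)`: the middle term vanishes and the other two
are triple products of `π, Γ, ω` in opposite orientations.
-/

theorem vecMul_hat (v ω : Fin 3 → ℝ) : v ᵥ* hat ω = v ⨯₃ ω := by
  ext i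
  fin_cases i <;> simp [hat, vecMul, dotProduct, Fin.sum_univ_three, cross_apply] <;> ring

theorem Matrix.IsSymm.dotProduct_mulVec_comm {n : Type*} [Fintype n] {J : Matrix n n ℝ}
    (hJ : J.IsSymm) (v w : n → ℝ) : v ⬝ᵥ J *ᵥ w = J *ᵥ v ⬝ᵥ w := by
  rw [dotProduct_mulVec, ← mulVec_transpose, hJ.eq]

theorem HasDerivAt.dotProduct {n : Type*} [Fintype n] {f g : ℝ → n → ℝ} {f' g' : n → ℝ}
    {t : ℝ} (hf : HasDerivAt f f' t) (hg : HasDerivAt g g' t) :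
    HasDerivAt (fun t => f t ⬝ᵥ g t) (f' ⬝ᵥ g t + f t ⬝ᵥ g') t := by
  unfold _root_.dotProduct
  rw [← Finset.sum_add_distrib]
  exact HasDerivAt.fun_sum fun i _ =>
    (hasDerivAt_pi.1 hf i).mul (hasDerivAt_pi.1 hg i) |>.congr_deriv (by ring)

theorem HasDerivAt.const_mulVec {m n : Type*} [Fintype m] [Fintype n] (J : Matrix m n ℝ)
    {f : ℝ → n → ℝ} {f' : n → ℝ} {t : ℝ} (hf : HasDerivAt f f' t) :
    HasDerivAt (fun t => J *ᵥ f t) (J *ᵥ f') t :=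
  (mulVecLin J).toContinuousLinearMap.hasFDerivAt.comp_hasDerivAt t hf

theorem HasDerivAt.vecMul_const {m n : Type*} [Fintype m] [Fintype n] (v : m → ℝ)
    {M : ℝ → Matrix m n ℝ} {M' : Matrix m n ℝ} {t : ℝ} (hM : HasDerivAt M M' t) :
    HasDerivAt (fun t => v ᵥ* M t) (v ᵥ* M') t :=
  let vecMulLeft : Matrix m n ℝ →ₗ[ℝ] n → ℝ :=
    { toFun := fun M => v ᵥ* M
      map_add' := fun A B => vecMul_add A B v
      map_smul' := fun c M => vecMul_smul v c M }
  vecMulLeft.toContinuousLinearMap.hasFDerivAt.comp_hasDerivAt t hM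

theorem hasDerivAt_dotProduct_eq_zero_of_euler_poisson {π Γ : ℝ → Fin 3 → ℝ} {ω τ : Fin 3 → ℝ}
    {t : ℝ} (hπ : HasDerivAt π (π t ⨯₃ ω + τ ⨯₃ Γ t) t) (hΓ : HasDerivAt Γ (Γ t ⨯₃ ω) t) :
    HasDerivAt (fun t => π t ⬝ᵥ Γ t) 0 t := by
  convert hπ.dotProduct hΓ using 1
  rw [add_dotProduct, dotProduct_comm (τ ⨯₃ Γ t), dot_cross_self, triple_product_permutation,
    ← cross_anticomm ω (π t), neg_dotProduct, dotProduct_comm (ω ⨯₃ π t)]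
  ring

theorem momentum_conserved_general
    (J : Matrix (Fin 3) (Fin 3) ℝ) (hJsymm : J.IsSymm)
    (m g : ℝ) (ρ : Fin 3 → ℝ)
    (R : ℝ → Matrix (Fin 3) (Fin 3) ℝ) (ω ω' : ℝ → Fin 3 → ℝ)
    (hω : ∀ t, HasDerivAt ω (ω' t) t)
    (hR : ∀ t, HasDerivAt R (R t * hat (ω t)) t)
    (hdyn : ∀ t, J.mulVec (ω' t) =
      crossProduct (J.mulVec (ω t)) (ω t)
        + (m * g) • crossProduct ρ ((R t)ᵀ.mulVec e3)) :
    ∀ t s : ℝ,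
      ω t ⬝ᵥ J.mulVec ((R t)ᵀ.mulVec e3) = ω s ⬝ᵥ J.mulVec ((R s)ᵀ.mulVec e3) := by
  simp only [mulVec_transpose, hJsymm.dotProduct_mulVec_comm]
  have hΓ (t : ℝ) : HasDerivAt (fun t => e3 ᵥ* R t) ((e3 ᵥ* R t) ⨯₃ ω t) t := by
    simpa only [← vecMul_vecMul, vecMul_hat] using (hR t).vecMul_const e3
  have hπ (t : ℝ) : HasDerivAt (fun t => J *ᵥ ω t)
      ((J *ᵥ ω t) ⨯₃ ω t + ((m * g) • ρ) ⨯₃ (e3 ᵥ* R t)) t := by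
    simpa only [hdyn, mulVec_transpose, map_smul, LinearMap.smul_apply] using
      (hω t).const_mulVec J
  have hderiv (t : ℝ) := hasDerivAt_dotProduct_eq_zero_of_euler_poisson (hπ t) (hΓ t)
  exact is_const_of_deriv_eq_zero (fun t => (hderiv t).differentiableAt) fun t => (hderiv t).deriv

/-- Along any solution of the 3D pendulum equations, the vertical component of the
angular momentum `h = ωᵀ J Rᵀe₃` is constant. -/
theorem momentum_conserved
    (J : Matrix (Fin 3) (Fin 3) ℝ) (hJsymm : J.IsSymm) (hJpos : J.PosDef)
    (m g : ℝ) (hm : 0 < m) (hg : 0 < g) (ρ : Fin 3 → ℝ)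
    (R : ℝ → Matrix (Fin 3) (Fin 3) ℝ) (ω ω' : ℝ → Fin 3 → ℝ)
    (hSO : ∀ t, R t ∈ SO3)
    (hω : ∀ t, HasDerivAt ω (ω' t) t)
    (hR : ∀ t, HasDerivAt R (R t * hat (ω t)) t)
    (hdyn : ∀ t, J.mulVec (ω' t) =
      crossProduct (J.mulVec (ω t)) (ω t)
        + (m * g) • crossProduct ρ ((R t)ᵀ.mulVec e3)) :
    ∀ t s : ℝ,
      ω t ⬝ᵥ J.mulVec ((R t)ᵀ.mulVec e3) = ω s ⬝ᵥ J.mulVec ((R s)ᵀ.mulVec e3) :=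
  momentum_conserved_general J hJsymm m g ρ R ω ω' hω hR hdyn
end

section
/- A pair (R_e, ω_e) ∈ SO(3) × ℝ³ is an equilibrium of the 3D pendulum equations (i.e., Jω_e × ω_e + mg ρ × R_eᵀe₃ = 0 and R_e ω̂_e = 0) if and only if ω_e = 0 and R_eᵀe₃ = ρ/‖ρ‖ or R_eᵀe₃ = −ρ/‖ρ‖. -/
open Matrix

/-- Euclidean norm of a vector in ℝ³. -/
noncomputable def enorm3 (v : Fin 3 → ℝ) : ℝ := Real.sqrt (v ⬝ᵥ v)

/-- `(R_e, ω_e)` is an equilibrium of the 3D pendulum iff `ω_e = 0` and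
`R_eᵀe₃ = ±ρ/‖ρ‖`. -/
theorem equilibria_characterization
    (J : Matrix (Fin 3) (Fin 3) ℝ) (hJsymm : J.IsSymm) (hJpos : J.PosDef)
    (m g : ℝ) (hm : 0 < m) (hg : 0 < g) (ρ : Fin 3 → ℝ) (hρ : ρ ≠ 0)
    (Re : Matrix (Fin 3) (Fin 3) ℝ) (hRe : Re ∈ SO3) (ωe : Fin 3 → ℝ) :
    (crossProduct (J.mulVec ωe) ωe + (m * g) • crossProduct ρ (Reᵀ.mulVec e3) = 0
        ∧ Re * hat ωe = 0)
      ↔ (ωe = 0 ∧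
          (Reᵀ.mulVec e3 = (enorm3 ρ)⁻¹ • ρ ∨ Reᵀ.mulVec e3 = -((enorm3 ρ)⁻¹ • ρ))) := by
  obtain ⟨hRR, hdet⟩ := hRe
  have hRTR : Reᵀ * Re = 1 := mul_eq_one_comm.mp hRR
  set v : Fin 3 → ℝ := Reᵀ.mulVec e3 with hv
  have hvnorm : v ⬝ᵥ v = 1 := by
    have h1 : Re.mulVec v = e3 := by
      rw [hv, Matrix.mulVec_mulVec, hRR, Matrix.one_mulVec]
    have h2 : e3 ⬝ᵥ Re.mulVec v = (e3 ᵥ* Re) ⬝ᵥ v := Matrix.dotProduct_mulVec _ _ _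
    rw [h1] at h2
    rw [← Matrix.mulVec_transpose] at h2
    have h3 : v ⬝ᵥ v = e3 ⬝ᵥ e3 := h2.symm
    rw [h3]
    simp [e3, dotProduct, Fin.sum_univ_three]
  have hs : (0:ℝ) < ρ ⬝ᵥ ρ := by
    rcases (show ∃ i, ρ i ≠ 0 by by_contra h; push_neg at h; exact hρ (funext h)) with ⟨i, hi⟩
    have hpos := mul_self_pos.mpr hi
    have hle : ρ i * ρ i ≤ ρ ⬝ᵥ ρ :=
      Finset.single_le_sum (f := fun j => ρ j * ρ j) (fun j _ => mul_self_nonneg _)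
        (Finset.mem_univ i)
    exact lt_of_lt_of_le hpos hle
  constructor
  · rintro ⟨h1, h2⟩
    have hhat : hat ωe = 0 := by
      have : Reᵀ * (Re * hat ωe) = Reᵀ * 0 := by rw [h2]
      rwa [← Matrix.mul_assoc, hRTR, Matrix.one_mul, Matrix.mul_zero] at this
    have hω : ωe = 0 := by
      have h01 := congrFun (congrFun hhat 0) 1
      have h02 := congrFun (congrFun hhat 0) 2
      have h12 := congrFun (congrFun hhat 1) 2
      simp [hat] at h01 h02 h12
      funext i; fin_cases i <;> simp [h01, h02, h12]
    subst hω
    refine ⟨rfl, ?_⟩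
    have hcross : crossProduct ρ v = 0 := by
      have hz : crossProduct (J.mulVec (0 : Fin 3 → ℝ)) 0 = 0 := by simp
      rw [hz, zero_add] at h1
      have hmg : m * g ≠ 0 := by positivity
      exact (smul_eq_zero.mp h1).resolve_left hmg
    have e0 := congrFun hcross 0
    have e1 := congrFun hcross 1
    have e2 := congrFun hcross 2
    simp [crossProduct] at e0 e1 e2
    set c : ℝ := (ρ ⬝ᵥ v) / (ρ ⬝ᵥ ρ) with hc
    have hsne : (ρ ⬝ᵥ ρ) ≠ 0 := ne_of_gt hs
    have k0 : v 0 * (ρ ⬝ᵥ ρ) = (ρ ⬝ᵥ v) * ρ 0 := by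
      simp only [dotProduct, Fin.sum_univ_three]
      linear_combination (-(ρ 1)) * e2 + ρ 2 * e1
    have k1 : v 1 * (ρ ⬝ᵥ ρ) = (ρ ⬝ᵥ v) * ρ 1 := by
      simp only [dotProduct, Fin.sum_univ_three]
      linear_combination ρ 0 * e2 - ρ 2 * e0
    have k2 : v 2 * (ρ ⬝ᵥ ρ) = (ρ ⬝ᵥ v) * ρ 2 := by
      simp only [dotProduct, Fin.sum_univ_three]
      linear_combination (-(ρ 0)) * e1 + ρ 1 * e0
    have hvc : v = c • ρ := by
      funext i
      fin_cases i
      · show v 0 = c * ρ 0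
        rw [hc, div_mul_eq_mul_div, eq_div_iff hsne]; linear_combination k0
      · show v 1 = c * ρ 1
        rw [hc, div_mul_eq_mul_div, eq_div_iff hsne]; linear_combination k1
      · show v 2 = c * ρ 2
        rw [hc, div_mul_eq_mul_div, eq_div_iff hsne]; linear_combination k2
    have hc2 : c ^ 2 * (ρ ⬝ᵥ ρ) = 1 := by
      have : v ⬝ᵥ v = c ^ 2 * (ρ ⬝ᵥ ρ) := by
        rw [hvc]; simp [dotProduct, Fin.sum_univ_three]; ring
      rw [← this, hvnorm]
    have hsqrt : Real.sqrt (ρ ⬝ᵥ ρ) ^ 2 = ρ ⬝ᵥ ρ := Real.sq_sqrt hs.le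
    have hsq_pos : (0:ℝ) < Real.sqrt (ρ ⬝ᵥ ρ) := Real.sqrt_pos.mpr hs
    have hcases : c = (Real.sqrt (ρ ⬝ᵥ ρ))⁻¹ ∨ c = -(Real.sqrt (ρ ⬝ᵥ ρ))⁻¹ := by
      have hinv : (Real.sqrt (ρ ⬝ᵥ ρ))⁻¹ * (Real.sqrt (ρ ⬝ᵥ ρ))⁻¹ = (ρ ⬝ᵥ ρ)⁻¹ := by
        rw [← mul_inv, Real.mul_self_sqrt hs.le]
      have hcc : c * c = (Real.sqrt (ρ ⬝ᵥ ρ))⁻¹ * (Real.sqrt (ρ ⬝ᵥ ρ))⁻¹ := by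
        rw [hinv]
        have h1' : c * c * (ρ ⬝ᵥ ρ) = 1 := by linear_combination hc2
        calc c * c = c * c * (ρ ⬝ᵥ ρ) * (ρ ⬝ᵥ ρ)⁻¹ := (mul_inv_cancel_right₀ hsne _).symm
          _ = (ρ ⬝ᵥ ρ)⁻¹ := by rw [h1', one_mul]
      exact mul_self_eq_mul_self_iff.mp hcc
    rcases hcases with h | h
    · left; rw [hvc, h]; rfl
    · right; rw [hvc, h, enorm3, neg_smul]
  · rintro ⟨hω, hcase⟩
    subst hω
    constructor
    · have hz : crossProduct (J.mulVec (0 : Fin 3 → ℝ)) 0 = 0 := by simp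
      rw [hz, zero_add]
      rcases hcase with h | h <;> rw [h] <;> simp [cross_self]
    · have : hat (0 : Fin 3 → ℝ) = 0 := by
        ext i j
        fin_cases i <;> fin_cases j <;> simp [hat] <;> rfl
      rw [this, Matrix.mul_zero]
end

section
/- Let Γ_e = −J⁻¹ρ/‖J⁻¹ρ‖ and ω_e = ±√(mg/‖J⁻¹ρ‖) J⁻¹ρ. Then (Γ_e, ω_e) is an equilibrium of the reduced 3D pendulum equations: Jω_e × ω_e + mg ρ × Γ_e = 0 and Γ_e × ω_e = 0. -/
open Matrix

/-!
Put `v = J⁻¹ρ`, so that `Jv = ρ`, `Γ_e = -‖v‖⁻¹ v` and `ω_e = c v` with `c² = mg/‖v‖`. Then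
`Γ_e` and `ω_e` are parallel, and by bilinearity both terms of the first equation are multiples
of `ρ × v`, with coefficients `c²` and `-mg/‖v‖` that cancel.
-/

theorem mulVec_smul_cross_smul {R : Type*} [CommRing R] (J : Matrix (Fin 3) (Fin 3) R)
    (v : Fin 3 → R) (s : R) :
    (J *ᵥ (s • v)) ⨯₃ (s • v) = (s * s) • ((J *ᵥ v) ⨯₃ v) := by
  simp only [mulVec_smul, map_smul, LinearMap.smul_apply, smul_smul]

theorem smul_cross_smul_self {R : Type*} [CommRing R] (a b : R) (v : Fin 3 → R) :
    (a • v) ⨯₃ (b • v) = 0 := by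
  simp only [map_smul, LinearMap.smul_apply, cross_self, smul_zero]

theorem pendulum_equilibrium_of_mulVec_eq {K : Type*} [Field K] (J : Matrix (Fin 3) (Fin 3) K)
    {ρ v : Fin 3 → K} (hv : J *ᵥ v = ρ) {mg n s : K} (hs : s * s = mg / n) :
    (J *ᵥ (s • v)) ⨯₃ (s • v) + mg • ρ ⨯₃ -(n⁻¹ • v) = 0 ∧ -(n⁻¹ • v) ⨯₃ (s • v) = 0 := by
  rw [← neg_smul]
  refine ⟨?_, smul_cross_smul_self _ _ v⟩
  rw [mulVec_smul_cross_smul, hv, map_smul, smul_smul, ← add_smul, hs, div_eq_mul_inv,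
    mul_neg, add_neg_cancel, zero_smul]

theorem relative_equilibrium_Jinv_general
    (J : Matrix (Fin 3) (Fin 3) ℝ) (hJpos : J.PosDef)
    (m g : ℝ) (hm : 0 < m) (hg : 0 < g) (ρ : Fin 3 → ℝ)
    (Γe ωe : Fin 3 → ℝ)
    (hΓe : Γe = -((enorm3 (J⁻¹.mulVec ρ))⁻¹ • J⁻¹.mulVec ρ))
    (hωe : ωe = Real.sqrt (m * g / enorm3 (J⁻¹.mulVec ρ)) • J⁻¹.mulVec ρ
        ∨ ωe = -(Real.sqrt (m * g / enorm3 (J⁻¹.mulVec ρ)) • J⁻¹.mulVec ρ)) :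
    crossProduct (J.mulVec ωe) ωe + (m * g) • crossProduct ρ Γe = 0
      ∧ crossProduct Γe ωe = 0 := by
  have hJv : J *ᵥ (J⁻¹ *ᵥ ρ) = ρ := by
    rw [mulVec_mulVec, mul_nonsing_inv _ ((isUnit_iff_isUnit_det J).mp hJpos.isUnit),
      one_mulVec]
  set c := Real.sqrt (m * g / enorm3 (J⁻¹ *ᵥ ρ))
  have hc : c * c = m * g / enorm3 (J⁻¹ *ᵥ ρ) :=
    Real.mul_self_sqrt (div_nonneg (by positivity) (Real.sqrt_nonneg _))
  obtain ⟨s, hs, rfl⟩ : ∃ s, s * s = m * g / enorm3 (J⁻¹ *ᵥ ρ) ∧ ωe = s • J⁻¹ *ᵥ ρ := by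
    rcases hωe with rfl | rfl
    · exact ⟨c, hc, rfl⟩
    · exact ⟨-c, by rw [neg_mul_neg, hc], (neg_smul c _).symm⟩
  subst hΓe
  exact pendulum_equilibrium_of_mulVec_eq J hJv hs

/-- The pair `Γ_e = −J⁻¹ρ/‖J⁻¹ρ‖`, `ω_e = ±√(mg/‖J⁻¹ρ‖) J⁻¹ρ` is a (relative)
equilibrium of the reduced 3D pendulum equations. -/
theorem relative_equilibrium_Jinv
    (J : Matrix (Fin 3) (Fin 3) ℝ) (hJsymm : J.IsSymm) (hJpos : J.PosDef)
    (m g : ℝ) (hm : 0 < m) (hg : 0 < g) (ρ : Fin 3 → ℝ) (hρ : ρ ≠ 0)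
    (Γe ωe : Fin 3 → ℝ)
    (hΓe : Γe = -((enorm3 (J⁻¹.mulVec ρ))⁻¹ • J⁻¹.mulVec ρ))
    (hωe : ωe = Real.sqrt (m * g / enorm3 (J⁻¹.mulVec ρ)) • J⁻¹.mulVec ρ
        ∨ ωe = -(Real.sqrt (m * g / enorm3 (J⁻¹.mulVec ρ)) • J⁻¹.mulVec ρ)) :
    crossProduct (J.mulVec ωe) ωe + (m * g) • crossProduct ρ Γe = 0
      ∧ crossProduct Γe ωe = 0 :=
  relative_equilibrium_Jinv_general J hJpos m g hm hg ρ Γe ωe hΓe hωe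
end

section
/- Suppose J = diag(J₁,J₂,J₃) with J₁,J₂,J₃ distinct positive and ρ = (0, ρ₂, ρ₃). Let p₁ = (γ, ρ₂/(J₂−J₁), ρ₃/(J₃−J₁)) for any γ ∈ ℝ with p₁ ≠ 0. Then Γ_e = −p₁/‖p₁‖ and ω_e = ±√(mg/‖p₁‖) p₁ satisfy the equilibrium conditions Jω_e × ω_e + mg ρ × Γ_e = 0 and Γ_e × ω_e = 0. -/
open Matrix

/-- For distinct principal moments of inertia and `ρ₁ = 0`, the family
`Γ_e = −p₁/‖p₁‖`, `ω_e = ±√(mg/‖p₁‖) p₁` with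
`p₁ = (γ, ρ₂/(J₂−J₁), ρ₃/(J₃−J₁))` consists of relative equilibria. -/
theorem additional_relative_equilibria
    (J₁ J₂ J₃ : ℝ) (hJ₁ : 0 < J₁) (hJ₂ : 0 < J₂) (hJ₃ : 0 < J₃)
    (h12 : J₁ ≠ J₂) (h13 : J₁ ≠ J₃) (h23 : J₂ ≠ J₃)
    (J : Matrix (Fin 3) (Fin 3) ℝ) (hJ : J = Matrix.diagonal ![J₁, J₂, J₃])
    (m g : ℝ) (hm : 0 < m) (hg : 0 < g)
    (ρ₂ ρ₃ : ℝ) (ρ : Fin 3 → ℝ) (hρ : ρ = ![0, ρ₂, ρ₃]) (hρ0 : ρ ≠ 0)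
    (γ : ℝ) (p₁ : Fin 3 → ℝ) (hp : p₁ = ![γ, ρ₂ / (J₂ - J₁), ρ₃ / (J₃ - J₁)])
    (hp0 : p₁ ≠ 0)
    (Γe ωe : Fin 3 → ℝ)
    (hΓe : Γe = -((enorm3 p₁)⁻¹ • p₁))
    (hωe : ωe = Real.sqrt (m * g / enorm3 p₁) • p₁
        ∨ ωe = -(Real.sqrt (m * g / enorm3 p₁) • p₁)) :
    crossProduct (J.mulVec ωe) ωe + (m * g) • crossProduct ρ Γe = 0
      ∧ crossProduct Γe ωe = 0 := by
  have h21 : J₂ - J₁ ≠ 0 := sub_ne_zero.mpr (Ne.symm h12)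
  have h31 : J₃ - J₁ ≠ 0 := sub_ne_zero.mpr (Ne.symm h13)
  set q₂ : ℝ := ρ₂ / (J₂ - J₁) with hq₂
  set q₃ : ℝ := ρ₃ / (J₃ - J₁) with hq₃
  have hρ' : ρ = ![0, q₂ * (J₂ - J₁), q₃ * (J₃ - J₁)] := by
    rw [hρ, hq₂, hq₃, div_mul_cancel₀ _ h21, div_mul_cancel₀ _ h31]
  have hdot : 0 < p₁ ⬝ᵥ p₁ := by
    have h1 : p₁ ⬝ᵥ p₁ ≠ 0 := fun hc => hp0 (dotProduct_self_eq_zero.mp hc)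
    have h2 : 0 ≤ p₁ ⬝ᵥ p₁ := Finset.sum_nonneg fun i _ => mul_self_nonneg (p₁ i)
    exact h2.lt_of_ne (Ne.symm h1)
  have hnpos : 0 < enorm3 p₁ := Real.sqrt_pos.mpr hdot
  set n : ℝ := enorm3 p₁ with hn
  have main : ∀ t : ℝ, t * t = m * g * n⁻¹ →
      crossProduct (J.mulVec (t • p₁)) (t • p₁) + (m * g) • crossProduct ρ Γe = 0
        ∧ crossProduct Γe (t • p₁) = 0 := by
    intro t ht
    constructor
    · rw [hJ, hρ', hΓe, hp]
      funext i
      fin_cases i <;> simp [cross_apply, Matrix.mulVec_diagonal]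
      · linear_combination (q₂ * q₃ * (J₂ - J₃)) * ht
      · linear_combination (γ * q₃ * (J₃ - J₁)) * ht
      · linear_combination (-(γ * q₂ * (J₂ - J₁))) * ht
    · rw [hΓe]
      funext i
      fin_cases i <;> simp [cross_apply] <;> ring
  have htt : Real.sqrt (m * g / n) * Real.sqrt (m * g / n) = m * g * n⁻¹ := by
    rw [Real.mul_self_sqrt (by positivity), div_eq_mul_inv]
  rcases hωe with h | h
  · rw [h]
    exact main _ htt
  · rw [h, ← neg_smul]
    refine main (-(Real.sqrt (m * g / n))) ?_
    rw [neg_mul_neg]; exact htt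
end
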